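/- Let N be an odd positive integer and let c, c' ∈ ℝ³. The matrix ϖ(c) − ϖ(c') is Hermitian and the sum of the absolute values of its eigenvalues (counted with multiplicity) equals the Euclidean norm ‖c − c'‖₂ = √((c₁−c'₁)² + (c₂−c'₂)² + (c₃−c'₃)²). Equivalently, the trace distance (1/2)·Tr|ϖ(c) − ϖ(c')| equals half the Euclidean distance between the triples c and c'. -/
import Mathlib


open Matrix BigOperators Polynomial
open scoped ComplexOrder

/-- The three Pauli matrices. -/
noncomputable def pauli : Fin 3 → Matrix (Fin 2) (Fin 2) ℂ :=
  ![!![0, 1; 1, 0], !![0, -Complex.I; Complex.I, 0], !![1, 0; 0, -1]]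

/-- The `N`-fold Kronecker power of a 2×2 matrix, with rows and columns indexed by
`Fin N → Fin 2` (the `N`-qubit computational basis). -/
noncomputable def kronPow (A : Matrix (Fin 2) (Fin 2) ℂ) (N : ℕ) :
    Matrix (Fin N → Fin 2) (Fin N → Fin 2) ℂ :=
  Matrix.of fun i j => ∏ k, A (i k) (j k)

/-- The `M³_N` state `ϖ(c) = 2^{-N} (I + c₁ σ₁^{⊗N} + c₂ σ₂^{⊗N} + c₃ σ₃^{⊗N})`. -/
noncomputable def Mstate (N : ℕ) (c : Fin 3 → ℝ) :
    Matrix (Fin N → Fin 2) (Fin N → Fin 2) ℂ :=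
  ((2 : ℂ) ^ N)⁻¹ • (1 + ∑ j : Fin 3, (c j : ℂ) • kronPow (pauli j) N)

lemma kronPow_one (N : ℕ) : kronPow (1 : Matrix (Fin 2) (Fin 2) ℂ) N = 1 := by
  ext i j
  simp only [kronPow, Matrix.of_apply]
  by_cases h : i = j
  · subst h; simp [Matrix.one_apply]
  · rw [Matrix.one_apply_ne h]
    obtain ⟨k, hk⟩ := Function.ne_iff.mp h
    exact Finset.prod_eq_zero (Finset.mem_univ k) (by simp [Matrix.one_apply, hk])

lemma kronPow_mul (A B : Matrix (Fin 2) (Fin 2) ℂ) (N : ℕ) :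
    kronPow A N * kronPow B N = kronPow (A * B) N := by
  ext i j
  simp only [kronPow, Matrix.mul_apply, Matrix.of_apply]
  conv_rhs => rw [Finset.prod_univ_sum]
  rw [Fintype.piFinset_univ]
  simp [Finset.prod_mul_distrib]

lemma kronPow_smul (z : ℂ) (A : Matrix (Fin 2) (Fin 2) ℂ) (N : ℕ) :
    kronPow (z • A) N = z ^ N • kronPow A N := by
  ext i j
  simp [kronPow, Finset.prod_mul_distrib, Finset.prod_const]

lemma pauli_herm (j : Fin 3) : (pauli j)ᴴ = pauli j := by
  fin_cases j <;>
    · ext a b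
      fin_cases a <;> fin_cases b <;>
        simp [pauli, Matrix.conjTranspose_apply]

lemma kronPow_herm (j : Fin 3) (N : ℕ) : (kronPow (pauli j) N).IsHermitian := by
  ext i k
  simp only [Matrix.conjTranspose_apply, kronPow, Matrix.of_apply, star_prod]
  refine Finset.prod_congr rfl fun m _ => ?_
  have := congrFun (congrFun (pauli_herm j) (i m)) (k m)
  simpa [Matrix.conjTranspose_apply] using this

lemma pauli_mul_self (j : Fin 3) : pauli j * pauli j = 1 := by
  fin_cases j <;>
    · ext a b
      fin_cases a <;> fin_cases b <;>
        simp [pauli, Matrix.mul_apply, Fin.sum_univ_two, Matrix.one_apply, Complex.I_mul_I,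
          Complex.ext_iff]

lemma pauli01 : pauli 0 * pauli 1 = Complex.I • pauli 2 := by
  ext a b; fin_cases a <;> fin_cases b <;>
    simp [pauli, Matrix.mul_apply, Fin.sum_univ_two]
lemma pauli10 : pauli 1 * pauli 0 = (-Complex.I) • pauli 2 := by
  ext a b; fin_cases a <;> fin_cases b <;>
    simp [pauli, Matrix.mul_apply, Fin.sum_univ_two]
lemma pauli12 : pauli 1 * pauli 2 = Complex.I • pauli 0 := by
  ext a b; fin_cases a <;> fin_cases b <;>
    simp [pauli, Matrix.mul_apply, Fin.sum_univ_two]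
lemma pauli21 : pauli 2 * pauli 1 = (-Complex.I) • pauli 0 := by
  ext a b; fin_cases a <;> fin_cases b <;>
    simp [pauli, Matrix.mul_apply, Fin.sum_univ_two]
lemma pauli20 : pauli 2 * pauli 0 = Complex.I • pauli 1 := by
  ext a b; fin_cases a <;> fin_cases b <;>
    simp [pauli, Matrix.mul_apply, Fin.sum_univ_two]
lemma pauli02 : pauli 0 * pauli 2 = (-Complex.I) • pauli 1 := by
  ext a b; fin_cases a <;> fin_cases b <;>
    simp [pauli, Matrix.mul_apply, Fin.sum_univ_two]

lemma anticomm {N : ℕ} (hN : Odd N) {j k l : Fin 3}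
    (hjk : pauli j * pauli k = Complex.I • pauli l)
    (hkj : pauli k * pauli j = (-Complex.I) • pauli l) :
    kronPow (pauli j) N * kronPow (pauli k) N =
      -(kronPow (pauli k) N * kronPow (pauli j) N) := by
  rw [kronPow_mul, kronPow_mul, hjk, hkj, kronPow_smul, kronPow_smul,
    neg_pow, hN.neg_one_pow, neg_one_mul, neg_smul, neg_neg]

lemma sq_lin {n : Type*} [Fintype n] [DecidableEq n]
    (X Y Z : Matrix n n ℂ)
    (hX : X * X = 1) (hY : Y * Y = 1) (hZ : Z * Z = 1)
    (hXY : X * Y = -(Y * X)) (hYZ : Y * Z = -(Z * Y)) (hXZ : X * Z = -(Z * X))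
    (a b d : ℂ) :
    (a • X + b • Y + d • Z) * (a • X + b • Y + d • Z)
      = (a ^ 2 + b ^ 2 + d ^ 2) • 1 := by
  simp only [add_mul, mul_add, Matrix.smul_mul, Matrix.mul_smul, hX, hY, hZ, hXY, hYZ, hXZ,
    smul_neg, smul_smul]
  module

lemma hermSmul {n : Type*} [Fintype n] (r : ℂ) (hr : star r = r)
    (M : Matrix n n ℂ) (hM : M.IsHermitian) : (r • M).IsHermitian := by
  unfold Matrix.IsHermitian at *
  rw [Matrix.conjTranspose_smul, hr, hM]

theorem stmt11 (N : ℕ) (hN : Odd N) (c c' : Fin 3 → ℝ) :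
    ∃ hH : (Mstate N c - Mstate N c').IsHermitian,
      ∑ i, |hH.eigenvalues i| =
        Real.sqrt ((c 0 - c' 0) ^ 2 + (c 1 - c' 1) ^ 2 + (c 2 - c' 2) ^ 2) := by
  set D := Mstate N c - Mstate N c' with hD
  set S : ℝ := (c 0 - c' 0) ^ 2 + (c 1 - c' 1) ^ 2 + (c 2 - c' 2) ^ 2 with hS
  have hS0 : 0 ≤ S := by positivity
  have hDeq : D = ((2 : ℂ) ^ N)⁻¹ •
      (((c 0 : ℂ) - c' 0) • kronPow (pauli 0) N + ((c 1 : ℂ) - c' 1) • kronPow (pauli 1) N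
        + ((c 2 : ℂ) - c' 2) • kronPow (pauli 2) N) := by
    rw [hD]
    simp only [Mstate, ← smul_sub]
    congr 1
    rw [Fin.sum_univ_three, Fin.sum_univ_three]
    match_scalars <;> ring
  have hstar : ∀ r r' : ℝ, star ((r : ℂ) - r') = (r : ℂ) - r' := by
    intro r r'
    simp [Complex.star_def, Complex.conj_ofReal]
  have hH : D.IsHermitian := by
    rw [hDeq]
    refine hermSmul _ (by simp) _
      (((hermSmul _ (hstar _ _) _ (kronPow_herm 0 N)).add
        (hermSmul _ (hstar _ _) _ (kronPow_herm 1 N))).add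
        (hermSmul _ (hstar _ _) _ (kronPow_herm 2 N)))
  refine ⟨hH, ?_⟩
  have hsq : D * D = (((S / 4 ^ N : ℝ)) : ℂ) • 1 := by
    rw [hDeq, Matrix.smul_mul, Matrix.mul_smul, smul_smul]
    rw [sq_lin _ _ _
      (by rw [kronPow_mul, pauli_mul_self, kronPow_one])
      (by rw [kronPow_mul, pauli_mul_self, kronPow_one])
      (by rw [kronPow_mul, pauli_mul_self, kronPow_one])
      (anticomm hN pauli01 pauli10) (anticomm hN pauli12 pauli21)
      (by rw [anticomm hN pauli20 pauli02, neg_neg])]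
    rw [smul_smul]
    congr 1
    have h2 : ((2 : ℂ) ^ N) ≠ 0 := by positivity
    have h4 : ((4 : ℂ)) ^ N = (2 : ℂ) ^ N * (2 : ℂ) ^ N := by
      rw [show ((4 : ℂ)) = 2 * 2 by norm_num, mul_pow]
    rw [hS]
    push_cast
    rw [h4]
    field_simp
  have key : ∀ i, |hH.eigenvalues i| = Real.sqrt (S / 4 ^ N) := by
    intro i
    have hv := hH.mulVec_eigenvectorBasis i
    have hvne : (⇑(hH.eigenvectorBasis i) : (Fin N → Fin 2) → ℂ) ≠ 0 := by
      intro h0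
      exact hH.eigenvectorBasis.orthonormal.ne_zero i (by ext x; exact congrFun h0 x)
    have h2 : D *ᵥ (D *ᵥ ⇑(hH.eigenvectorBasis i))
        = ((hH.eigenvalues i : ℂ) ^ 2) • ⇑(hH.eigenvectorBasis i) := by
      rw [hv, Matrix.mulVec_smul, hv, smul_smul,
        RCLike.real_smul_eq_coe_smul (K := ℂ)]
      congr 1
      simp [sq]
    have h3 : D *ᵥ (D *ᵥ ⇑(hH.eigenvectorBasis i))
        = (((S / 4 ^ N : ℝ)) : ℂ) • ⇑(hH.eigenvectorBasis i) := by
      rw [Matrix.mulVec_mulVec, hsq, Matrix.smul_mulVec, Matrix.one_mulVec]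
    have h4 : ((hH.eigenvalues i : ℂ) ^ 2) = (((S / 4 ^ N : ℝ)) : ℂ) := by
      obtain ⟨x, hx⟩ := Function.ne_iff.mp hvne
      simp only [Pi.zero_apply] at hx
      have hx' := congrFun (h2.symm.trans h3) x
      simp only [Pi.smul_apply, smul_eq_mul] at hx'
      exact mul_right_cancel₀ hx hx'
    have h5 : (hH.eigenvalues i) ^ 2 = S / 4 ^ N := by exact_mod_cast h4
    rw [← Real.sqrt_sq_eq_abs, h5]
  rw [Finset.sum_congr rfl fun i _ => key i, Finset.sum_const, Finset.card_univ]
  have hcard : Fintype.card (Fin N → Fin 2) = 2 ^ N := by simp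
  rw [hcard, nsmul_eq_mul]
  have h4 : Real.sqrt (4 ^ N) = 2 ^ N := by
    rw [show (4 : ℝ) ^ N = ((2 : ℝ) ^ N) ^ 2 by
        rw [← pow_mul, mul_comm N 2, pow_mul]; norm_num,
      Real.sqrt_sq (by positivity)]
  rw [Real.sqrt_div hS0, h4]
  have h2 : ((2 : ℝ) ^ N) ≠ 0 := by positivity
  push_cast
  field_simp
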